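/- arXiv:1512.06511 — 5 statements merged into one kernel-verified Lean document; each statement's English description precedes it below -/
import Mathlib

section
/- Let p be a prime, U a finite word of length r and V a nonempty finite word of length s over P = {0,...,p−1}. Let (a_n)_{n≥0} be the sequence U V V V ⋯ and α = Σ_{n=0}^∞ a_n p^n ∈ ℚ_p. Then α is rational and its height satisfies H(α) ≤ p^{r+s}, where H(α) denotes the maximum of the absolute values of the numerator and denominator of α written in lowest terms over ℤ. -/
/-!
Splitting off the first `r` digits and then one period of the tail, the series
`S = ∑ aₙ pⁿ` satisfies `S = A + p^r T` and `T = B + p^s T`, where `A` and `B` are the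
integers with base-`p` digits `U` and `V`. Hence `S = (A (1 - p^s) + p^r B) / (1 - p^s)`;
since `0 ≤ A < p^r` and `0 ≤ B < p^s`, numerator and denominator have absolute value at
most `p^(r+s)`, and reducing to lowest terms only makes them smaller.
-/

/-- The naive height of a rational number: the maximum of the absolute values of
its numerator and denominator in lowest terms. -/
def ratHeight (q : ℚ) : ℕ := max q.num.natAbs q.den

open Finset

theorem ratHeight_intCast_div_le (N D : ℤ) (hD : D ≠ 0) :
    ratHeight (N / D) ≤ max N.natAbs D.natAbs := by
  rw [← Rat.divInt_eq_div]
  refine max_le_max ?_ (Int.natAbs_le_of_dvd_ne_zero (Rat.den_dvd N D) hD)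
  rcases eq_or_ne N 0 with rfl | hN
  · simp
  · exact Int.natAbs_le_of_dvd_ne_zero (Rat.num_dvd N hD) hN

theorem natAbs_mul_one_sub_add_mul_le {A B P Q : ℕ} (hA : A < P) (hB : B < Q) :
    ((A : ℤ) * (1 - Q) + P * B).natAbs ≤ P * Q := by
  zify
  rw [abs_le]
  constructor <;> nlinarith

theorem ratHeight_add_mul_div_one_sub_le {A B P Q : ℕ} (hA : A < P) (hB : B < Q) (hQ : Q ≠ 1) :
    ratHeight (A + P * B / (1 - Q)) ≤ P * Q := by
  have hD : (1 - Q : ℤ) ≠ 0 := by omega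
  have hq : (A + P * B / (1 - Q) : ℚ) =
      ((A * (1 - Q) + P * B : ℤ) : ℚ) / ((1 - Q : ℤ) : ℚ) := by
    have : (1 - Q : ℚ) ≠ 0 := by exact_mod_cast hD
    push_cast
    field_simp
  rw [hq]
  refine (ratHeight_intCast_div_le _ _ hD).trans (max_le (natAbs_mul_one_sub_add_mul_le hA hB) ?_)
  have : 1 ≤ P := by omega
  zify; rw [abs_le]; constructor <;> nlinarith

theorem Nat.ofDigits_eq_sum_range_getD {R : Type*} [Semiring R] (b : R) (L : List ℕ) :
    Nat.ofDigits b L = ∑ i ∈ range L.length, (L.getD i 0 : R) * b ^ i := by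
  induction L with
  | nil => simp [Nat.ofDigits]
  | cons d L ih =>
    rw [Nat.ofDigits, ih, List.length_cons, sum_range_succ', mul_sum, add_comm]
    congr 1
    · refine sum_congr rfl fun i _ => ?_
      rw [← mul_assoc, ← Nat.cast_comm, mul_assoc, _root_.pow_succ']
      simp
    · simp

section TopologicalField

variable {K : Type*} [Field K] [TopologicalSpace K] [IsTopologicalRing K] [T2Space K]
  {c : ℕ → K} {x : K}

theorem tsum_mul_pow_eq_sum_range_add (hc : Summable fun n => c n * x ^ n) (r : ℕ) :
    ∑' n, c n * x ^ n = ∑ n ∈ range r, c n * x ^ n + x ^ r * ∑' n, c (n + r) * x ^ n := by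
  rw [← hc.sum_add_tsum_nat_add r, ← tsum_mul_left]
  simp only [pow_add, mul_left_comm, mul_comm]

theorem tsum_mul_pow_of_periodic {s : ℕ} (hc : Summable fun n => c n * x ^ n)
    (hper : Function.Periodic c s) (hx : x ^ s ≠ 1) :
    ∑' n, c n * x ^ n = (∑ n ∈ range s, c n * x ^ n) / (1 - x ^ s) := by
  have h := tsum_mul_pow_eq_sum_range_add hc s
  simp only [show ∀ n, c (n + s) = c n from hper] at h
  rw [eq_div_iff (sub_ne_zero.mpr hx.symm)]
  linear_combination h

end TopologicalField

namespace Padic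

variable {p : ℕ} [Fact p.Prime]

theorem summable_natCast_mul_p_pow (a : ℕ → ℕ) :
    Summable fun n => (a n : ℚ_[p]) * (p : ℚ_[p]) ^ n := by
  refine .of_norm_bounded
    (summable_geometric_of_lt_one (norm_nonneg _) (norm_p_lt_one (p := p))) fun n => ?_
  rw [norm_mul, norm_pow]
  exact mul_le_of_le_one_left (by positivity) (by simpa using norm_int_le_one (a n))

end Padic

theorem padic_periodic_digits_rational_height_le
    (p : ℕ) [Fact p.Prime] (U V : List ℕ)
    (hU : ∀ x ∈ U, x < p) (hV : ∀ x ∈ V, x < p) (hVne : V ≠ [])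
    (a : ℕ → ℕ)
    (ha : ∀ n, a n = if n < U.length then U.getD n 0
      else V.getD ((n - U.length) % V.length) 0) :
    ∃ q : ℚ, (q : ℚ_[p]) = ∑' n : ℕ, (a n : ℚ_[p]) * (p : ℚ_[p]) ^ n ∧
      ratHeight q ≤ p ^ (U.length + V.length) := by
  have hp : 1 < p := (Fact.out : p.Prime).one_lt
  have hs : V.length ≠ 0 := List.length_pos_of_ne_nil hVne |>.ne'
  have hpre (n : ℕ) (hn : n < U.length) : a n = U.getD n 0 := by rw [ha, if_pos hn]
  have htail (n : ℕ) : a (n + U.length) = V.getD (n % V.length) 0 := by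
    rw [ha, if_neg (by omega), Nat.add_sub_cancel]
  have hper : Function.Periodic (fun n => (a (n + U.length) : ℚ_[p])) V.length := fun n => by
    simp only [htail, Nat.add_mod_right]
  have hps : (p : ℚ_[p]) ^ V.length ≠ 1 := by exact_mod_cast (Nat.one_lt_pow hs hp).ne'
  refine ⟨Nat.ofDigits p U + (p ^ U.length : ℕ) * Nat.ofDigits p V / (1 - (p ^ V.length : ℕ)),
    ?_, pow_add p _ _ ▸ ratHeight_add_mul_div_one_sub_le (Nat.ofDigits_lt_base_pow_length hp hU)
      (Nat.ofDigits_lt_base_pow_length hp hV) (Nat.one_lt_pow hs hp).ne'⟩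
  rw [tsum_mul_pow_eq_sum_range_add (Padic.summable_natCast_mul_p_pow a) U.length,
    tsum_mul_pow_of_periodic (Padic.summable_natCast_mul_p_pow _) hper hps]
  push_cast [Nat.ofDigits_eq_sum_range_getD]
  rw [mul_div_assoc]
  congr 1
  · exact sum_congr rfl fun n hn => by rw [hpre n (mem_range.mp hn)]
  · congr 2
    exact sum_congr rfl fun n hn => by rw [htail, Nat.mod_eq_of_lt (mem_range.mp hn)]
end

section
/- Let 1 ≤ m < n be integers and let x_1, …, x_m ∈ ℤ^n be linearly independent vectors over ℚ with |x_1|_∞ ≤ ⋯ ≤ |x_m|_∞ (sup-norms). Then there exists a vector hyperplane H of ℚ^n containing x_1, …, x_m whose height satisfies H(H) ≤ m! · |x_m|_∞^m. -/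
/-!
Choose `m` columns of `x` forming a nonsingular minor and one further column `j₀`. The signed
maximal minors of the resulting `m × (m + 1)` submatrix form a nonzero integer vector orthogonal
to every `x i` (Cramer's rule). Each of them is an `m × m` determinant with entries bounded by
`|x_m|_∞`, hence at most `m! · |x_m|_∞^m` by the Leibniz expansion, and dividing by the gcd
makes the vector primitive without increasing its entries.
-/

open Finset Matrix

namespace Matrix

variable {m ι : Type*} [Fintype m] [DecidableEq m]

theorem exists_submatrix_det_ne_zero [Fintype ι] {K : Type*} [Field K] (A : Matrix m ι K)
    (hA : LinearIndependent K A.row) : ∃ g : m → ι, (A.submatrix id g).det ≠ 0 := by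
  have hrank : Module.finrank K (Submodule.span K (Set.range A.col)) = Fintype.card m := by
    rw [← rank_eq_finrank_span_cols, hA.rank_matrix]
  obtain ⟨f, hf, -, hli⟩ := Submodule.exists_fun_fin_finrank_span_eq K (Set.range A.col)
  choose g hg using hf
  let e : m ≃ Fin _ := Fintype.equivFinOfCardEq hrank.symm
  refine ⟨g ∘ e, ?_⟩
  rw [← isUnit_iff_ne_zero, ← isUnit_iff_isUnit_det, ← linearIndependent_cols_iff_isUnit]
  have hcols : (A.submatrix id (g ∘ e)).col = f ∘ e := by
    ext k i
    simp [← hg]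
  exact hcols ▸ hli.comp e e.injective

variable [DecidableEq ι] {R : Type*} [CommRing R]

/-- The signed maximal minors of the submatrix of `X` on the columns `g` and `j₀`, written through
Cramer's rule so that `X *ᵥ X.minorVec g j₀ = 0` is `mulVec_cramer`. -/
def minorVec (X : Matrix m ι R) (g : m → ι) (j₀ : ι) : ι → R :=
  Pi.single j₀ (X.submatrix id g).det -
    ∑ k, Pi.single (g k) ((X.submatrix id g).cramer (X.col j₀) k)

theorem mulVec_minorVec [Fintype ι] (X : Matrix m ι R) (g : m → ι) (j₀ : ι) :
    X *ᵥ X.minorVec g j₀ = 0 := by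
  have hcramer := mulVec_cramer (X.submatrix id g) (X.col j₀)
  simp only [minorVec, mulVec_sub, mulVec_sum, mulVec_single]
  ext i
  simpa [mulVec, dotProduct, mul_comm, sub_eq_zero] using (congrFun hcramer i).symm

variable {X : Matrix m ι R} {g : m → ι} {j₀ : ι}

theorem minorVec_apply_self (hj₀ : j₀ ∉ Set.range g) :
    X.minorVec g j₀ j₀ = (X.submatrix id g).det := by
  have hg : ∀ k, g k ≠ j₀ := fun k hk => hj₀ ⟨k, hk⟩
  simp [minorVec, hg]

theorem minorVec_apply_apply (hg : Function.Injective g) (hj₀ : j₀ ∉ Set.range g) (k : m) :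
    X.minorVec g j₀ (g k) = -(X.submatrix id (Function.update g k j₀)).det := by
  have hk : g k ≠ j₀ := fun h => hj₀ ⟨k, h⟩
  have hcol : (X.submatrix id g).updateCol k (X.col j₀) =
      X.submatrix id (Function.update g k j₀) := by
    ext i l
    rcases eq_or_ne l k with rfl | hl <;> simp [*]
  simp [minorVec, Pi.single_apply, hg.eq_iff, cramer_apply, hcol, hk]

theorem minorVec_apply_of_notMem {j : ι} (hj : j ≠ j₀) (hjg : j ∉ Set.range g) :
    X.minorVec g j₀ j = 0 := by
  have hg : ∀ k, j ≠ g k := fun k hk => hjg ⟨k, hk.symm⟩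
  simp [minorVec, hg, hj]

theorem abv_minorVec_le [Nontrivial R] {S : Type*} [CommRing S] [LinearOrder S]
    [IsStrictOrderedRing S] (abv : AbsoluteValue R S) {β : S} (hX : ∀ i j, abv (X i j) ≤ β)
    (hg : Function.Injective g) (hj₀ : j₀ ∉ Set.range g) (j : ι) :
    abv (X.minorVec g j₀ j) ≤ (Fintype.card m).factorial • β ^ Fintype.card m := by
  have hdet (g' : m → ι) : abv (X.submatrix id g').det ≤ _ := det_le fun _ _ => hX _ _
  by_cases hj : j = j₀
  · rw [hj, minorVec_apply_self hj₀]
    exact hdet g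
  by_cases hjg : j ∈ Set.range g
  · obtain ⟨k, rfl⟩ := hjg
    rw [minorVec_apply_apply hg hj₀, abv.map_neg]
    exact hdet _
  · rw [minorVec_apply_of_notMem hj hjg, abv.map_zero]
    exact (abv.nonneg _).trans (hdet g)

theorem exists_ne_zero_mulVec_eq_zero_natAbs_le [Fintype ι] (X : Matrix m ι ℤ)
    (hX : LinearIndependent ℚ fun i j => (X i j : ℚ)) (hcard : Fintype.card m < Fintype.card ι)
    {β : ℕ} (hβ : ∀ i j, (X i j).natAbs ≤ β) :
    ∃ y ≠ 0, X *ᵥ y = 0 ∧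
      ∀ j, (y j).natAbs ≤ (Fintype.card m).factorial * β ^ Fintype.card m := by
  obtain ⟨g, hgℚ⟩ := (X.map (Int.cast : ℤ → ℚ)).exists_submatrix_det_ne_zero hX
  have hdet : (X.submatrix id g).det ≠ 0 := by
    rw [← Int.cast_ne_zero (α := ℚ), Int.cast_det]
    exact hgℚ
  have hg : Function.Injective g := fun k l hkl => by
    by_contra hne
    exact hdet (det_zero_of_column_eq hne fun i => by simp [hkl])
  obtain ⟨j₀, hj₀⟩ : ∃ j₀, j₀ ∉ Set.range g := by
    by_contra! h
    exact hcard.not_ge (Fintype.card_le_of_surjective g h)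
  refine ⟨X.minorVec g j₀, fun h => hdet ?_, X.mulVec_minorVec g j₀, fun j => ?_⟩
  · rw [← minorVec_apply_self hj₀, h, Pi.zero_apply]
  · have hXβ (i : m) (j : ι) : |X i j| ≤ β := by
      rw [Int.abs_eq_natAbs]
      exact_mod_cast hβ i j
    zify
    simpa using abv_minorVec_le AbsoluteValue.abs hXβ hg hj₀ j

end Matrix

theorem exists_eq_smul_and_gcd_eq_one {α ι : Type*} [CommMonoidWithZero α]
    [NormalizedGCDMonoid α] [Fintype ι] {y : ι → α} (hy : y ≠ 0) :
    ∃ d : α, d ≠ 0 ∧ ∃ z : ι → α, y = d • z ∧ univ.gcd z = 1 := by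
  have : Nonempty ι := by
    by_contra! h
    exact hy (Subsingleton.elim _ _)
  obtain ⟨z, hz, hgcd⟩ := univ.extract_gcd y univ_nonempty
  refine ⟨univ.gcd y, fun h => hy ?_, z, funext fun j => hz j (mem_univ j), hgcd⟩
  exact funext fun j => gcd_eq_zero_iff.1 h j (mem_univ j)

/-- Linearly independent integer vectors `x 0, …, x (m-1)` in `ℤⁿ` with
nondecreasing sup-norms lie in a common rational hyperplane (given by a primitive
integer normal vector `y`) of height at most `m! · |x_{m-1}|_∞^m`. -/
theorem hyperplane_through_integer_vectors
    (m n : ℕ) (hm : 1 ≤ m) (hmn : m < n) (x : Fin m → Fin n → ℤ)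
    (hli : LinearIndependent ℚ fun i => fun j => ((x i j : ℚ)))
    (hmono : Monotone fun i => Finset.univ.sup fun j => (x i j).natAbs) :
    ∃ y : Fin n → ℤ, y ≠ 0 ∧ Finset.univ.gcd y = 1 ∧
      (∀ i, ∑ j, y j * x i j = 0) ∧
      (Finset.univ.sup fun j => (y j).natAbs) ≤
        m.factorial *
          (Finset.univ.sup fun j => (x ⟨m - 1, by omega⟩ j).natAbs) ^ m := by
  have hβ (i : Fin m) (j : Fin n) :
      (x i j).natAbs ≤ univ.sup fun j => (x ⟨m - 1, by omega⟩ j).natAbs :=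
    (le_sup (f := fun j => (x i j).natAbs) (mem_univ j)).trans (hmono (Fin.mk_le_mk.2 (by omega)))
  obtain ⟨y, hy, hxy, hyβ⟩ :=
    exists_ne_zero_mulVec_eq_zero_natAbs_le (of x) hli (by simpa using hmn) hβ
  obtain ⟨d, hd, z, rfl, hz⟩ := exists_eq_smul_and_gcd_eq_one hy
  have hxz : of x *ᵥ z = 0 := by
    rw [mulVec_smul] at hxy
    exact (smul_eq_zero.1 hxy).resolve_left hd
  refine ⟨z, fun h => hy (by simp [h]), hz, fun i => ?_, Finset.sup_le fun j _ => ?_⟩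
  · simpa [mulVec, dotProduct, mul_comm] using congrFun hxz i
  · calc (z j).natAbs ≤ ((d • z) j).natAbs := by
          simpa [Int.natAbs_mul] using Nat.le_mul_of_pos_left _ (Int.natAbs_pos.2 hd)
      _ ≤ _ := by simpa using hyβ j
end

section
/- Let θ > 1 be an irrational real number and ρ a real number. Define t'_n = 1 if n = ⌈kθ + ρ⌉ for some integer k and t'_n = 0 otherwise, and s_{n,1/θ,−(ρ+1)/θ} = ⌊(n+1)/θ − (ρ+1)/θ⌋ − ⌊n/θ − (ρ+1)/θ⌋. Then t'_n = s_{n,1/θ,−(ρ+1)/θ} for all n ≥ 1. -/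
open scoped Classical in
/-- The indicator sequence of the set `{⌈kθ+ρ⌉ : k ∈ ℤ}` coincides with the
Sturmian sequence `s` of slope `1/θ` and intercept `-(ρ+1)/θ`. -/
theorem beatty_indicator_eq_sturmian_floor
    (θ ρ : ℝ) (hθ : 1 < θ) (hirr : Irrational θ) (n : ℕ) (hn : 1 ≤ n) :
    (if ∃ k : ℤ, (n : ℤ) = ⌈(k : ℝ) * θ + ρ⌉ then (1 : ℤ) else 0) =
      ⌊((n : ℝ) + 1) / θ - (ρ + 1) / θ⌋ - ⌊(n : ℝ) / θ - (ρ + 1) / θ⌋ := by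
  have hθ0 : (0:ℝ) < θ := by linarith
  set a : ℝ := (n : ℝ) / θ - (ρ + 1) / θ with ha
  set b : ℝ := ((n : ℝ) + 1) / θ - (ρ + 1) / θ with hb
  have ea : a = ((n : ℝ) - (ρ + 1)) / θ := by rw [ha]; ring
  have eb : b = ((n : ℝ) + 1 - (ρ + 1)) / θ := by rw [hb]; ring
  have hab : a ≤ b := by
    rw [ea, eb]
    gcongr
    linarith
  have hba : b ≤ a + 1 := by
    rw [ea, eb]
    have h2 : 1 / θ ≤ 1 := by rw [div_le_one hθ0]; linarith
    have : ((n : ℝ) + 1 - (ρ + 1)) / θ - ((n : ℝ) - (ρ + 1)) / θ = 1 / θ := by ring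
    linarith
  have hle : ⌊a⌋ ≤ ⌊b⌋ := Int.floor_le_floor hab
  have hlt1 : ⌊b⌋ ≤ ⌊a⌋ + 1 := by
    have := Int.floor_le_floor hba
    rwa [Int.floor_add_one] at this
  have hiff : (∃ k : ℤ, (n : ℤ) = ⌈(k : ℝ) * θ + ρ⌉) ↔ ⌊a⌋ < ⌊b⌋ := by
    constructor
    · rintro ⟨k, hk⟩
      have hk' : ((n : ℤ) : ℝ) - 1 < (k : ℝ) * θ + ρ ∧ (k : ℝ) * θ + ρ ≤ ((n : ℤ) : ℝ) :=
        Int.ceil_eq_iff.mp hk.symm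
      have h1 : a < (k : ℝ) := by
        rw [ea, div_lt_iff₀ hθ0]
        push_cast at hk' ⊢
        linarith [hk'.1]
      have h2 : (k : ℝ) ≤ b := by
        rw [eb, le_div_iff₀ hθ0]
        push_cast at hk' ⊢
        linarith [hk'.2]
      exact lt_of_lt_of_le (Int.floor_lt.mpr h1) (Int.le_floor.mpr h2)
    · intro h
      refine ⟨⌊b⌋, ?_⟩
      have h1 : ((n : ℝ) - (ρ + 1)) < (⌊b⌋ : ℝ) * θ := by
        rw [← div_lt_iff₀ hθ0, ← ea]
        have : (⌊a⌋ : ℝ) + 1 ≤ (⌊b⌋ : ℝ) := by exact_mod_cast h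
        linarith [Int.lt_floor_add_one a]
      have h2 : (⌊b⌋ : ℝ) * θ ≤ (n : ℝ) + 1 - (ρ + 1) := by
        rw [← le_div_iff₀ hθ0, ← eb]
        exact Int.floor_le b
      symm
      rw [Int.ceil_eq_iff]
      push_cast
      constructor <;> linarith
  by_cases h : ∃ k : ℤ, (n : ℤ) = ⌈(k : ℝ) * θ + ρ⌉
  · rw [if_pos h]
    have := hiff.mp h
    omega
  · rw [if_neg h]
    have : ¬ ⌊a⌋ < ⌊b⌋ := fun hh => h (hiff.mpr hh)
    omega
end

section
/- Let (a_n)_{n≥0} be a sequence over a finite alphabet A and suppose there exist integers κ ≥ 2 and n_0 ≥ 1 such that the subword complexity satisfies p(a, n) ≤ κn for all n ≥ n_0. Then for each n ≥ n_0 there exist finite words U, V over A with V nonempty and a rational w > 0 such that: (i) U V^w is a prefix of a; (ii) |U| ≤ 2κ|V|; (iii) n/2 ≤ |V| ≤ κn; (v) |U V^w| / |UV| ≥ 1 + 1/(4κ+2); and (vi) |UV| ≤ (κ+1)n − 1. -/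
/-!
Among the `κn + 1` factors of length `n` starting at positions `0, …, κn` at most `κn` are
distinct, so two of them coincide, at positions `i < i + t ≤ κn`. Then `a` has period `t` on
`[i, i + t + n)`. Take for `V` the block of length `T` at `i`, where `T` is the least multiple of
`t` with `n ≤ 2T`, for `U` the prefix of length `i`, and `w = (t + n) / T`. Since `T` is least,
`2T < n + 2t`, so the repetition overhangs `UV` by more than `n / 2`, while `|UV| < (κ + 1)n`.
-/

/-- The length of the fractional power `V^w` of a word of length `s`:
`⌊w⌋` full copies of `V` followed by the prefix of `V` of length `⌈(w-⌊w⌋)s⌉`. -/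
def powLen (s : ℕ) (w : ℚ) : ℕ := ⌊w⌋.toNat * s + ⌈(w - ⌊w⌋) * s⌉.toNat

/-- `U V^w` is a prefix of the infinite word `a`. -/
def IsPrefixPow {A : Type*} (a : ℕ → A) (U V : List A) (w : ℚ) : Prop :=
  (∀ i < U.length, a i = U.getD i (a 0)) ∧
  ∀ i, U.length ≤ i → i < U.length + powLen V.length w →
    a i = V.getD ((i - U.length) % V.length) (a 0)

/-- The subword complexity of `a`: the number of distinct factors of length `n`. -/
noncomputable def complexity {A : Type*} (a : ℕ → A) (n : ℕ) : ℕ :=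
  Set.ncard {wd : List A | ∃ i, wd = (List.range n).map fun j => a (i + j)}

def factor {A : Type*} (a : ℕ → A) (i n : ℕ) : List A :=
  (List.range n).map fun j => a (i + j)

def HasPeriodOn {A : Type*} (a : ℕ → A) (i L t : ℕ) : Prop :=
  ∀ m < L, a (i + m) = a (i + m % t)

section Words

variable {A : Type*} {a : ℕ → A}

@[simp]
theorem length_factor (i n : ℕ) : (factor a i n).length = n := by
  simp [factor]

theorem factor_eq_factor_iff {i j n : ℕ} :
    factor a i n = factor a j n ↔ ∀ k < n, a (i + k) = a (j + k) := by
  simp [factor, List.map_inj_left]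

theorem exists_lt_factor_eq_of_complexity_lt [Finite A] {n m : ℕ} (h : complexity a n < m) :
    ∃ i j, i < j ∧ j < m ∧ factor a i n = factor a j n := by
  have hfin : {wd : List A | ∃ i, wd = factor a i n}.Finite :=
    (List.finite_length_eq A n).subset (by rintro _ ⟨i, rfl⟩; simp)
  by_contra! hinj
  refine (Set.le_ncard_of_inj_on_range (factor a · n)
    (fun i _ => (⟨i, rfl⟩ : ∃ j, factor a i n = factor a j n)) ?_ hfin).not_gt h
  intro i hi j hj hij
  by_contra hne
  rcases Nat.lt_or_gt_of_ne hne with hlt | hgt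
  · exact hinj i j hlt hj hij
  · exact hinj j i hgt hi hij.symm

theorem hasPeriodOn_of_forall_eq_add {i t n : ℕ} (h : ∀ k < n, a (i + k) = a (i + t + k)) :
    HasPeriodOn a i (t + n) t := by
  obtain rfl | ht := t.eq_zero_or_pos
  · simp [HasPeriodOn]
  intro m
  induction m using Nat.strong_induction_on with
  | _ m ih =>
    intro hm
    rcases lt_or_ge m t with hmt | htm
    · rw [Nat.mod_eq_of_lt hmt]
    · rw [Nat.mod_eq_sub_mod htm, ← ih (m - t) (by omega) (by omega), h (m - t) (by omega)]
      congr 1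
      omega

theorem HasPeriodOn.of_dvd {i L t T : ℕ} (h : HasPeriodOn a i L t) (hd : t ∣ T) :
    HasPeriodOn a i L T := by
  intro m hm
  rw [h m hm, h (m % T) ((Nat.mod_le m T).trans_lt hm), Nat.mod_mod_of_dvd m hd]

theorem powLen_natCast_div (p : ℕ) {T : ℕ} (hT : 0 < T) : powLen T ((p : ℚ) / T) = p := by
  have hfloor : ⌊(p : ℚ) / T⌋ = (p / T : ℕ) := by
    rw [show (p : ℚ) = ((p : ℤ) : ℚ) by norm_cast, Rat.floor_intCast_div_natCast]
    exact (Int.natCast_div p T).symm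
  have hfrac : ((p : ℚ) / T - ((p / T : ℕ) : ℤ)) * T = (p % T : ℕ) := by
    have hdiv : ((p / T : ℕ) : ℚ) * T + (p % T : ℕ) = p := by exact_mod_cast Nat.div_add_mod' p T
    rw [sub_mul, div_mul_cancel₀ _ (by positivity), Int.cast_natCast]
    linarith
  rw [powLen, hfloor, hfrac, Int.ceil_natCast, Int.toNat_natCast, Int.toNat_natCast]
  exact Nat.div_add_mod' p T

theorem HasPeriodOn.isPrefixPow {i L T : ℕ} (h : HasPeriodOn a i L T) (hT : 0 < T) :
    IsPrefixPow a (factor a 0 i) (factor a i T) ((L : ℚ) / T) := by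
  refine ⟨fun k hk => ?_, fun k hik hk => ?_⟩
  · simp only [length_factor] at hk
    simp [factor, hk]
  · simp only [length_factor, powLen_natCast_div L hT] at hik hk
    have hmod : (k - i) % T < T := Nat.mod_lt _ hT
    simp only [factor, List.getD_eq_getElem, List.length_map, List.length_range,
      hmod, List.getElem_map, List.getElem_range]
    rw [← h (k - i) (by omega), Nat.add_sub_cancel' hik]

end Words

theorem exists_least_multiple_ge_half {t n : ℕ} (ht : 0 < t) (hn : 0 < n) :
    ∃ T, t ∣ T ∧ n ≤ 2 * T ∧ 2 * T < n + 2 * t ∧ (T = t ∨ T < n) := by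
  obtain ⟨q, hq⟩ : ∃ q, q = (n + 2 * t - 1) / (2 * t) := ⟨_, rfl⟩
  have hq_le : q * (2 * t) ≤ n + 2 * t - 1 := hq ▸ Nat.div_mul_le_self _ _
  have hq_gt : n + 2 * t - 1 < 2 * t * (q + 1) := hq ▸ Nat.lt_mul_div_succ _ (by omega)
  refine ⟨t * q, dvd_mul_right t q, ?_⟩
  have e₁ : q * (2 * t) = 2 * (t * q) := by ring
  have e₂ : 2 * t * (q + 1) = 2 * (t * q) + 2 * t := by ring
  rcases Nat.lt_or_ge q 2 with hq₂ | hq₂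
  · interval_cases q <;> omega
  · have : t * 2 ≤ t * q := Nat.mul_le_mul_left t hq₂
    omega

theorem one_add_one_div_mul_le {κ n U V L : ℕ} (hUV : U + V ≤ (κ + 1) * n)
    (hL : n + 2 * V < 2 * L) :
    (1 + 1 / (4 * (κ : ℝ) + 2)) * ((U : ℝ) + V) ≤ (U : ℝ) + L := by
  have hL' : (n : ℝ) + 1 ≤ 2 * ((L : ℝ) - V) := by
    have : (n : ℝ) + 2 * V + 1 ≤ 2 * L := by exact_mod_cast hL
    linarith
  have hUV' : (U : ℝ) + V ≤ (κ + 1) * n := by exact_mod_cast hUV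
  have hκ : (0 : ℝ) < 4 * κ + 2 := by positivity
  have hκn : (0 : ℝ) ≤ κ * n := by positivity
  have key : ((U : ℝ) + V) / (4 * κ + 2) ≤ L - V := by
    rw [div_le_iff₀ hκ]
    nlinarith [mul_le_mul_of_nonneg_left hL' (Nat.cast_nonneg κ : (0 : ℝ) ≤ κ)]
  calc (1 + 1 / (4 * (κ : ℝ) + 2)) * ((U : ℝ) + V) = (U + V) + (U + V) / (4 * κ + 2) := by ring
    _ ≤ U + L := by linarith

theorem exists_prefix_repetition_of_linear_complexity_general
    {A : Type*} [Fintype A] (a : ℕ → A) (κ n₀ : ℕ)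
    (hcomp : ∀ n, n₀ ≤ n → complexity a n ≤ κ * n) :
    ∀ n, n₀ ≤ n → ∃ (U V : List A) (w : ℚ), V ≠ [] ∧ 0 < w ∧
      IsPrefixPow a U V w ∧
      U.length ≤ 2 * κ * V.length ∧
      n ≤ 2 * V.length ∧ V.length ≤ κ * n ∧
      (1 + 1 / (4 * (κ : ℝ) + 2)) * ((U.length : ℝ) + V.length) ≤
        ((U.length : ℝ) + powLen V.length w) ∧
      U.length + V.length ≤ (κ + 1) * n - 1 := by
  intro n hn
  obtain ⟨i, j, hij, hj, hfac⟩ :=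
    exists_lt_factor_eq_of_complexity_lt (Nat.lt_succ_of_le (hcomp n hn))
  obtain ⟨t, rfl⟩ : ∃ t, j = i + t := ⟨j - i, by omega⟩
  have hκn : 0 < κ * n := by omega
  have hnκn : n ≤ κ * n := Nat.le_mul_of_pos_left n (pos_of_mul_pos_left hκn n.zero_le)
  obtain ⟨T, htT, hnT, hTn, hT⟩ :=
    exists_least_multiple_ge_half (by omega : 0 < t) (pos_of_mul_pos_right hκn κ.zero_le)
  have hT₀ : 0 < T := by omega
  have hper := (hasPeriodOn_of_forall_eq_add (factor_eq_factor_iff.1 hfac)).of_dvd htT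
  have hUV : i + T ≤ (κ + 1) * n - 1 := by
    rw [add_one_mul]
    omega
  refine ⟨factor a 0 i, factor a i T, ((t + n : ℕ) : ℚ) / T, ?_,
    div_pos (by norm_cast; omega) (by norm_cast), hper.isPrefixPow hT₀, ?_, ?_, ?_, ?_, ?_⟩ <;>
    simp only [length_factor, powLen_natCast_div _ hT₀, ne_eq, ← List.length_eq_zero_iff]
  · omega
  · nlinarith [Nat.mul_le_mul_left κ hnT]
  · exact hnT
  · omega
  · exact one_add_one_div_mul_le (n := n) (by omega) (by omega)
  · exact hUV

theorem exists_prefix_repetition_of_linear_complexity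
    {A : Type*} [Fintype A] (a : ℕ → A) (κ n₀ : ℕ) (hκ : 2 ≤ κ) (hn₀ : 1 ≤ n₀)
    (hcomp : ∀ n, n₀ ≤ n → complexity a n ≤ κ * n) :
    ∀ n, n₀ ≤ n → ∃ (U V : List A) (w : ℚ), V ≠ [] ∧ 0 < w ∧
      IsPrefixPow a U V w ∧
      U.length ≤ 2 * κ * V.length ∧
      n ≤ 2 * V.length ∧ V.length ≤ κ * n ∧
      (1 + 1 / (4 * (κ : ℝ) + 2)) * ((U.length : ℝ) + V.length) ≤
        ((U.length : ℝ) + powLen V.length w) ∧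
      U.length + V.length ≤ (κ + 1) * n - 1 :=
  exists_prefix_repetition_of_linear_complexity_general a κ n₀ hcomp
end

section
/- Let ξ ∈ ℚ_p and let c_0, c_1, c_2, c_3, θ, ρ, δ be positive real numbers. Let (β_j)_{j≥1} be a sequence of positive integers with β_j < β_{j+1} ≤ c_0 β_j^θ for all j, and let (α_j)_{j≥1} be a sequence of distinct rational numbers such that c_1 β_j^{−1−ρ} ≤ |ξ − α_j|_p ≤ c_2 β_j^{−1−δ} and H(α_j) ≤ c_3 β_j for all j ≥ 1. Then δ ≤ w_1(ξ) ≤ (1+ρ)θ/δ − 1. -/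
/-- The set of good rational approximations to `ξ` of exponent `w`;
`w₁(ξ) ≥ c` iff this set is infinite for every `w < c`, and `w₁(ξ) ≤ c` iff it is
finite for every `w > c`. -/
def approxSet {p : ℕ} [Fact p.Prime] (ξ : ℚ_[p]) (w : ℝ) : Set ℚ :=
  {α | 0 < ‖ξ - (α : ℚ_[p])‖ ∧ ‖ξ - (α : ℚ_[p])‖ ≤ (ratHeight α : ℝ) ^ (-(w + 1))}

open Filter Topology Real

lemma ratHeight_pos (q : ℚ) : 0 < ratHeight q :=
  lt_max_of_lt_right q.pos

lemma abs_num_le_ratHeight (q : ℚ) : |(q.num : ℝ)| ≤ ratHeight q := by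
  rw [← Int.cast_abs, Int.abs_eq_natAbs]
  exact_mod_cast le_max_left _ _

lemma den_le_ratHeight (q : ℚ) : (q.den : ℝ) ≤ ratHeight q := by
  exact_mod_cast le_max_right _ _

lemma finite_setOf_ratHeight_le (X : ℝ) : {q : ℚ | (ratHeight q : ℝ) ≤ X}.Finite := by
  obtain ⟨N, hN⟩ := exists_nat_ge X
  refine (((Set.finite_Icc (-(N : ℤ)) N).prod (Set.finite_Iic N)).preimage
    (f := fun q : ℚ => (q.num, q.den)) fun q _ r _ h => ?_).subset fun q hq => ?_
  · simp only [Prod.mk.injEq] at h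
    exact Rat.ext h.1 h.2
  · have hq : ratHeight q ≤ N := by exact_mod_cast (show (ratHeight q : ℝ) ≤ X from hq).trans hN
    have hnum : q.num.natAbs ≤ N := (le_max_left _ _).trans hq
    have hden : q.den ≤ N := (le_max_right _ _).trans hq
    simp only [Set.mem_preimage, Set.mem_prod, Set.mem_Icc, Set.mem_Iic]
    omega

lemma exists_succ_le_lt {α : Type*} [LinearOrder α] {f : ℕ → α} {x : α} (h₀ : x < f 0)
    (h : ∃ n, f n ≤ x) : ∃ m, f (m + 1) ≤ x ∧ x < f m := by
  by_contra! H
  obtain ⟨n, hn⟩ := h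
  have hlt : ∀ k, x < f k := fun k =>
    Nat.rec h₀ (fun m ih => lt_of_not_ge fun hm => (H m hm).not_gt ih) k
  exact (hlt n).not_ge hn

lemma log_le_of_le_mul_rpow {x c b e : ℝ} (hx : 0 < x) (hc : 0 < c) (hb : 0 < b)
    (h : x ≤ c * b ^ e) : log x ≤ log c + e * log b := by
  rw [← log_rpow hb, ← log_mul hc.ne' (rpow_pos_of_pos hb e).ne']
  exact log_le_log hx h

lemma le_log_of_mul_rpow_le {x c b e : ℝ} (hc : 0 < c) (hb : 0 < b)
    (h : c * b ^ e ≤ x) : log c + e * log b ≤ log x := by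
  rw [← log_rpow hb, ← log_mul hc.ne' (rpow_pos_of_pos hb e).ne']
  exact log_le_log (by positivity) h

section Padic

variable {p : ℕ} [Fact p.Prime]

lemma inv_abs_le_norm_intCast {z : ℤ} (hz : z ≠ 0) : |(z : ℝ)|⁻¹ ≤ ‖(z : ℚ_[p])‖ := by
  have hdvd : (p : ℤ) ^ padicValInt p z ∣ |z| := (dvd_abs _ _).mpr (padicValInt_dvd z)
  have hle : ((p : ℝ) ^ padicValInt p z) ≤ |(z : ℝ)| := by
    exact_mod_cast Int.le_of_dvd (abs_pos.mpr hz) hdvd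
  rw [Padic.norm_eq_zpow_neg_valuation (by exact_mod_cast hz), Padic.valuation_intCast,
    zpow_neg, zpow_natCast]
  exact inv_anti₀ (pow_pos (by exact_mod_cast (Fact.out : p.Prime).pos) _) hle

lemma inv_two_mul_ratHeight_le_norm_sub {r s : ℚ} (hrs : r ≠ s) :
    (2 * ratHeight r * ratHeight s : ℝ)⁻¹ ≤ ‖(r : ℚ_[p]) - s‖ := by
  set A : ℤ := r.num * s.den - s.num * r.den
  have hA : (r - s) * (r.den * s.den : ℕ) = (A : ℚ) := by
    push_cast [A]
    linear_combination (s.den : ℚ) * r.mul_den_eq_num - (r.den : ℚ) * s.mul_den_eq_num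
  have hA₀ : A ≠ 0 := by
    rintro hA₀
    rw [hA₀, Int.cast_zero, mul_eq_zero, sub_eq_zero] at hA
    exact hA.elim hrs (by positivity)
  have hAbs : |(A : ℝ)| ≤ 2 * ratHeight r * ratHeight s := by
    have := abs_num_le_ratHeight r
    have := abs_num_le_ratHeight s
    have := den_le_ratHeight r
    have := den_le_ratHeight s
    calc |(A : ℝ)| = |(r.num : ℝ) * s.den - s.num * r.den| := by push_cast [A]; rfl
      _ ≤ |(r.num : ℝ)| * s.den + |(s.num : ℝ)| * r.den := by
        simpa [abs_mul] using abs_sub (r.num * s.den : ℝ) (s.num * r.den)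
      _ ≤ ratHeight r * ratHeight s + ratHeight s * ratHeight r := by gcongr
      _ = 2 * ratHeight r * ratHeight s := by ring
  calc (2 * ratHeight r * ratHeight s : ℝ)⁻¹ ≤ |(A : ℝ)|⁻¹ :=
        inv_anti₀ (abs_pos.mpr (Int.cast_ne_zero.mpr hA₀)) hAbs
    _ ≤ ‖(A : ℚ_[p])‖ := inv_abs_le_norm_intCast hA₀
    _ = ‖(r : ℚ_[p]) - s‖ * ‖((r.den * s.den : ℕ) : ℚ_[p])‖ := by
        rw [← norm_mul]; exact_mod_cast congrArg (fun x : ℚ => ‖(x : ℚ_[p])‖) hA.symm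
    _ ≤ ‖(r : ℚ_[p]) - s‖ :=
        mul_le_of_le_one_right (norm_nonneg _) (by exact_mod_cast Padic.norm_int_le_one _)

end Padic

section Approximation

variable {p : ℕ} [Fact p.Prime] {ξ : ℚ_[p]}

lemma approxSet_anti {w w' : ℝ} (h : w ≤ w') : approxSet ξ w' ⊆ approxSet ξ w :=
  fun q hq => ⟨hq.1, hq.2.trans <| rpow_le_rpow_of_exponent_le
    (by exact_mod_cast ratHeight_pos q) (by linarith)⟩

lemma mem_approxSet_iff_log {w : ℝ} {q : ℚ} :
    q ∈ approxSet ξ w ↔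
      0 < ‖ξ - (q : ℚ_[p])‖ ∧ log ‖ξ - (q : ℚ_[p])‖ ≤ -(w + 1) * log (ratHeight q) := by
  have hH : (0 : ℝ) < ratHeight q := by exact_mod_cast ratHeight_pos q
  refine and_congr_right fun hq => ?_
  rw [← log_rpow hH, log_le_log_iff hq (rpow_pos_of_pos hH _)]

lemma mul_log_le_of_norm_sub_le {q a : ℚ} {b c₂ c₃ δ : ℝ} (hqa : q ≠ a) (hb : 0 < b)
    (hc₂ : 0 < c₂) (hc₃ : 0 < c₃) (hdist : ‖(q : ℚ_[p]) - a‖ ≤ c₂ * b ^ (-(1 + δ)))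
    (hH : (ratHeight a : ℝ) ≤ c₃ * b) :
    δ * log b ≤ log (2 * c₂ * c₃) + log (ratHeight q) := by
  have hHq : (0 : ℝ) < ratHeight q := by exact_mod_cast ratHeight_pos q
  have hHa : (0 : ℝ) < ratHeight a := by exact_mod_cast ratHeight_pos a
  have hsep := log_le_of_le_mul_rpow (by positivity) hc₂ hb
    ((inv_two_mul_ratHeight_le_norm_sub (p := p) hqa).trans hdist)
  have hlogH : log (ratHeight a) ≤ log c₃ + log b := by
    rw [← log_mul hc₃.ne' hb.ne']; exact log_le_log hHa hH
  rw [log_inv, log_mul (by positivity) hHa.ne', log_mul two_ne_zero hHq.ne'] at hsep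
  rw [log_mul (by positivity) hc₃.ne', log_mul two_ne_zero hc₂.ne']
  linarith

variable {β : ℕ → ℕ} {α : ℕ → ℚ} {c₀ c₁ c₂ c₃ θ ρ δ w : ℝ}

lemma approxSet_infinite_of_lt_of_nonneg (hβ : Tendsto (fun j => (β j : ℝ)) atTop atTop)
    (hβpos : ∀ j, 0 < β j) (hinj : Function.Injective α) (hc₂ : 0 < c₂) (hc₃ : 0 < c₃)
    (hpos : ∀ j, 0 < ‖ξ - (α j : ℚ_[p])‖)
    (hup : ∀ j, ‖ξ - (α j : ℚ_[p])‖ ≤ c₂ * (β j : ℝ) ^ (-(1 + δ)))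
    (hH : ∀ j, (ratHeight (α j) : ℝ) ≤ c₃ * β j) (hw₀ : 0 ≤ w) (hw : w < δ) :
    (approxSet ξ w).Infinite := by
  have hlarge : ∀ᶠ j in atTop, (log c₂ + (w + 1) * log c₃) / (δ - w) ≤ log (β j) :=
    (tendsto_log_atTop.comp hβ).eventually_ge_atTop _
  have hmem : ∀ᶠ j in atTop, α j ∈ approxSet ξ w := hlarge.mono fun j hj => by
    have hβj : (0 : ℝ) < β j := by exact_mod_cast hβpos j
    have hHj : log (ratHeight (α j)) ≤ log c₃ + log (β j) := by
      rw [← log_mul hc₃.ne' hβj.ne']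
      exact log_le_log (by exact_mod_cast ratHeight_pos _) (hH j)
    have hdist := log_le_of_le_mul_rpow (hpos j) hc₂ hβj (hup j)
    rw [div_le_iff₀ (by linarith)] at hj
    refine mem_approxSet_iff_log.mpr ⟨hpos j, ?_⟩
    linarith [mul_le_mul_of_nonneg_left hHj (by linarith : (0 : ℝ) ≤ w + 1)]
  have hinf : {j | α j ∈ approxSet ξ w}.Infinite :=
    Nat.frequently_atTop_iff_infinite.mp hmem.frequently
  exact (hinf.image hinj.injOn).mono (Set.image_subset_iff.mpr fun _ h => h)

lemma approxSet_infinite_of_lt (hβ : Tendsto (fun j => (β j : ℝ)) atTop atTop)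
    (hβpos : ∀ j, 0 < β j) (hinj : Function.Injective α) (hc₂ : 0 < c₂) (hc₃ : 0 < c₃)
    (hδ : 0 < δ) (hpos : ∀ j, 0 < ‖ξ - (α j : ℚ_[p])‖)
    (hup : ∀ j, ‖ξ - (α j : ℚ_[p])‖ ≤ c₂ * (β j : ℝ) ^ (-(1 + δ)))
    (hH : ∀ j, (ratHeight (α j) : ℝ) ≤ c₃ * β j) (hw : w < δ) :
    (approxSet ξ w).Infinite :=
  (approxSet_infinite_of_lt_of_nonneg hβ hβpos hinj hc₂ hc₃ hpos hup hH (le_max_right w 0)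
    (max_lt hw hδ)).mono (approxSet_anti (le_max_left w 0))

lemma mul_log_ratHeight_le_of_between (hc₀ : 0 < c₀) (hc₁ : 0 < c₁) (hc₂ : 0 < c₂)
    (hc₃ : 0 < c₃) (hθ : 0 < θ) (hρ : 0 < ρ) (hδ : 0 < δ) (hβpos : ∀ j, 0 < β j)
    (hβgrow : ∀ j, (β (j + 1) : ℝ) ≤ c₀ * (β j : ℝ) ^ θ)
    (hlow : ∀ j, c₁ * (β j : ℝ) ^ (-(1 + ρ)) ≤ ‖ξ - (α j : ℚ_[p])‖)
    (hup : ∀ j, ‖ξ - (α j : ℚ_[p])‖ ≤ c₂ * (β j : ℝ) ^ (-(1 + δ)))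
    (hH : ∀ j, (ratHeight (α j) : ℝ) ≤ c₃ * β j) {q : ℚ} (hq : q ∈ approxSet ξ w) {m : ℕ}
    (hnext : ‖ξ - (α (m + 1) : ℚ_[p])‖ ≤ ‖ξ - (q : ℚ_[p])‖)
    (hprev : ‖ξ - (q : ℚ_[p])‖ < ‖ξ - (α m : ℚ_[p])‖) :
    (δ * (w + 1) - (1 + ρ) * θ) * log (ratHeight q) ≤
      (1 + ρ) * (δ * log c₀ + θ * log (2 * c₂ * c₃)) - δ * log c₁ := by
  have hβm : (0 : ℝ) < β m := by exact_mod_cast hβpos m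
  have hβm' : (0 : ℝ) < β (m + 1) := by exact_mod_cast hβpos (m + 1)
  have hqm : q ≠ α m := by rintro rfl; exact hprev.false
  have hdist : ‖(q : ℚ_[p]) - α m‖ ≤ c₂ * (β m : ℝ) ^ (-(1 + δ)) := by
    refine le_trans ?_ (hup m)
    simpa [norm_sub_rev (q : ℚ_[p]) ξ, max_eq_right hprev.le] using
      IsUltrametricDist.norm_add_le_max ((q : ℚ_[p]) - ξ) (ξ - α m)
  have hsep := mul_log_le_of_norm_sub_le hqm hβm hc₂ hc₃ hdist (hH m)
  have hgrow := log_le_of_le_mul_rpow hβm' hc₀ hβm (hβgrow m)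
  have hnext_pos : 0 < ‖ξ - (α (m + 1) : ℚ_[p])‖ := (hlow (m + 1)).trans_lt' (by positivity)
  have hfar := (le_log_of_mul_rpow_le hc₁ hβm' (hlow (m + 1))).trans <|
    (log_le_log hnext_pos hnext).trans (mem_approxSet_iff_log.mp hq).2
  linarith [mul_le_mul_of_nonneg_left hsep (by positivity : (0 : ℝ) ≤ (1 + ρ) * θ),
    mul_le_mul_of_nonneg_left hgrow (by positivity : (0 : ℝ) ≤ δ * (1 + ρ)),
    mul_le_mul_of_nonneg_left hfar hδ.le]

lemma approxSet_finite_of_lt (hc₀ : 0 < c₀) (hc₁ : 0 < c₁) (hc₂ : 0 < c₂)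
    (hc₃ : 0 < c₃) (hθ : 0 < θ) (hρ : 0 < ρ) (hδ : 0 < δ) (hβpos : ∀ j, 0 < β j)
    (hβgrow : ∀ j, (β (j + 1) : ℝ) ≤ c₀ * (β j : ℝ) ^ θ)
    (hlow : ∀ j, c₁ * (β j : ℝ) ^ (-(1 + ρ)) ≤ ‖ξ - (α j : ℚ_[p])‖)
    (hup : ∀ j, ‖ξ - (α j : ℚ_[p])‖ ≤ c₂ * (β j : ℝ) ^ (-(1 + δ)))
    (hH : ∀ j, (ratHeight (α j) : ℝ) ≤ c₃ * β j)
    (hlim : Tendsto (fun j => ‖ξ - (α j : ℚ_[p])‖) atTop (𝓝 0))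
    (hw : (1 + ρ) * θ / δ - 1 < w) : (approxSet ξ w).Finite := by
  have hexp : 0 < δ * (w + 1) - (1 + ρ) * θ := by
    rw [sub_lt_iff_lt_add, div_lt_iff₀ hδ] at hw; linarith
  have hw₁ : 0 < w + 1 :=
    pos_of_mul_pos_right ((by positivity : 0 < (1 + ρ) * θ).trans (sub_pos.mp hexp)) hδ.le
  set C := (1 + ρ) * (δ * log c₀ + θ * log (2 * c₂ * c₃)) - δ * log c₁
  set B := max (C / (δ * (w + 1) - (1 + ρ) * θ)) (-log ‖ξ - (α 0 : ℚ_[p])‖ / (w + 1))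
  refine (finite_setOf_ratHeight_le (exp B)).subset fun q hq => ?_
  obtain ⟨hq₀, hqlog⟩ := mem_approxSet_iff_log.mp hq
  refine (log_le_iff_le_exp (by exact_mod_cast ratHeight_pos q)).mp ?_
  rcases lt_or_ge ‖ξ - (q : ℚ_[p])‖ ‖ξ - (α 0 : ℚ_[p])‖ with hfirst | hfirst
  · obtain ⟨m, hnext, hprev⟩ :=
      exists_succ_le_lt hfirst (hlim.eventually (ge_mem_nhds hq₀)).exists
    refine le_max_of_le_left ((le_div_iff₀ hexp).mpr ?_)
    linarith [mul_log_ratHeight_le_of_between hc₀ hc₁ hc₂ hc₃ hθ hρ hδ hβpos hβgrow hlow hup hH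
      hq hnext hprev]
  · refine le_max_of_le_right ((le_div_iff₀ hw₁).mpr ?_)
    have hβ₀ : (0 : ℝ) < β 0 := by exact_mod_cast hβpos 0
    linarith [log_le_log ((hlow 0).trans_lt' (by positivity)) hfirst]

end Approximation

/-- An algebraic-approximation criterion bounding `w₁(ξ)` from both sides:
`δ ≤ w₁(ξ) ≤ (1+ρ)θ/δ − 1`. -/
theorem w_one_bounds_of_approx_sequence
    (p : ℕ) [Fact p.Prime] (ξ : ℚ_[p]) (c₀ c₁ c₂ c₃ θ ρ δ : ℝ)
    (hc₀ : 0 < c₀) (hc₁ : 0 < c₁) (hc₂ : 0 < c₂) (hc₃ : 0 < c₃)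
    (hθ : 0 < θ) (hρ : 0 < ρ) (hδ : 0 < δ)
    (β : ℕ → ℕ) (hβpos : ∀ j, 0 < β j)
    (hβmono : ∀ j, β j < β (j + 1))
    (hβgrow : ∀ j, (β (j + 1) : ℝ) ≤ c₀ * (β j : ℝ) ^ θ)
    (α : ℕ → ℚ) (hinj : Function.Injective α)
    (hlow : ∀ j, c₁ * (β j : ℝ) ^ (-(1 + ρ)) ≤ ‖ξ - (α j : ℚ_[p])‖)
    (hup : ∀ j, ‖ξ - (α j : ℚ_[p])‖ ≤ c₂ * (β j : ℝ) ^ (-(1 + δ)))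
    (hH : ∀ j, (ratHeight (α j) : ℝ) ≤ c₃ * β j) :
    (∀ w : ℝ, w < δ → (approxSet ξ w).Infinite) ∧
    (∀ w : ℝ, (1 + ρ) * θ / δ - 1 < w → (approxSet ξ w).Finite) := by
  have hβ : Tendsto (fun j => (β j : ℝ)) atTop atTop :=
    tendsto_natCast_atTop_atTop.comp (strictMono_nat_of_lt_succ hβmono).tendsto_atTop
  have hpos : ∀ j, 0 < ‖ξ - (α j : ℚ_[p])‖ := fun j =>
    (hlow j).trans_lt' (mul_pos hc₁ (rpow_pos_of_pos (by exact_mod_cast hβpos j) _))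
  have hlim : Tendsto (fun j => ‖ξ - (α j : ℚ_[p])‖) atTop (𝓝 0) := by
    refine squeeze_zero (fun j => norm_nonneg _) hup ?_
    simpa using ((tendsto_rpow_neg_atTop (by linarith : 0 < 1 + δ)).comp hβ).const_mul c₂
  exact ⟨fun w hw => approxSet_infinite_of_lt hβ hβpos hinj hc₂ hc₃ hδ hpos hup hH hw,
    fun w hw => approxSet_finite_of_lt hc₀ hc₁ hc₂ hc₃ hθ hρ hδ hβpos hβgrow hlow hup hH hlim hw⟩
end
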